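/- arXiv:1110.6526 — 3 statements merged into one kernel-verified Lean document; each statement's English description precedes it below -/
import Mathlib

section
/- Let (X,d_X) be a geodesic metric space and let δ, ε, R > 0. Suppose F : ℍⁿ → X (exponential model ℝ^{n-1} × ℝ) satisfies: (1) t ↦ F(x,t) is a geodesic for all x ∈ ℝ^{n-1}; (2) for distinct x, x', the geodesics F∘η_x and F∘η_{x'} are two sides of an ideal δ-slim triangle in X; (3) if e^{-t}|x - x'| < ε then d_X(F(x,t),F(x',t)) ≤ R; (4) whenever e^{-t_k}|x_k - x_k'| → ∞, then d_X(F(x_k,t_k),F(x_k',t_k)) → ∞. Then there exists K ≥ 0 such that F is a K-almost-isometric embedding. -/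
open Filter

/-- The inverse hyperbolic cosine. -/
noncomputable def arcosh (x : ℝ) : ℝ := Real.log (x + Real.sqrt (x ^ 2 - 1))

/-- Hyperbolic distance in the exponential model `ℝ^{n-1} × ℝ` with metric
`ds² = e^{-2t}|dx|² + dt²` (closed formula). -/
noncomputable def hypDist {m : ℕ} (p q : EuclideanSpace ℝ (Fin m) × ℝ) : ℝ :=
  arcosh (1 + (dist p.1 q.1 ^ 2 + (Real.exp p.2 - Real.exp q.2) ^ 2) /
    (2 * Real.exp p.2 * Real.exp q.2))

/-! Put `T = log (|x - x'| / ε)`. The images of the vertical lines through `x` and `x'` are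
`(R + 2)`-close above height `T`, and by properness they are far apart below `T - c`. A point of
one image that is close to the other image is close to it at the same height, so far apart the slim
triangle makes both images fellow-travel its third side `ρ`; comparing positions along `ρ` at
heights `t` and `T - c` shows that, going down, they run along `ρ` in opposite directions, so their
distance at height `t ≤ T` is `2 (T - t)` up to a constant. Consequently
`d(F (x, s), F (x', t))` is, up to a constant, `max (2 T - s - t) |s - t|`, the length of the path
up to height `max s t T`, across and down again; the closed formula for `hypDist` gives the same
estimate in `ℍⁿ`. -/

lemma abs_arcosh_sub_log_le {y : ℝ} (hy : 1 ≤ y) : |arcosh y - Real.log y| ≤ Real.log 2 := by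
  have hs : Real.sqrt (y ^ 2 - 1) ≤ y := Real.sqrt_le_iff.2 ⟨by linarith, by linarith⟩
  have hlow : Real.log y ≤ arcosh y :=
    Real.log_le_log (by linarith) (le_add_of_nonneg_right (Real.sqrt_nonneg _))
  have hup : arcosh y ≤ Real.log 2 + Real.log y := by
    rw [← Real.log_mul two_ne_zero (by positivity)]
    exact Real.log_le_log (by positivity) (by linarith)
  rw [abs_le]
  constructor <;> linarith [Real.log_nonneg one_le_two]

lemma hypDist_eq_arcosh {m : ℕ} (x x' : EuclideanSpace ℝ (Fin m)) (s t : ℝ) :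
    hypDist (x, s) (x', t) = arcosh
      ((Real.exp (s - t) + Real.exp (t - s) + dist x x' ^ 2 / (Real.exp s * Real.exp t)) / 2) := by
  rw [hypDist]
  congr 1
  rw [Real.exp_sub, Real.exp_sub]
  field_simp
  ring

lemma hypDist_vertical {m : ℕ} (x : EuclideanSpace ℝ (Fin m)) (s t : ℝ) :
    hypDist (x, s) (x, t) = |s - t| := by
  rw [hypDist_eq_arcosh, dist_self, zero_pow two_ne_zero, zero_div, add_zero, ← neg_sub s t,
    ← Real.cosh_eq, ← Real.cosh_abs]
  exact Real.arcosh_cosh (abs_nonneg _)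

lemma abs_hypDist_sub_max_le {m : ℕ} {x x' : EuclideanSpace ℝ (Fin m)} (hxx : x ≠ x') (s t : ℝ) :
    |hypDist (x, s) (x', t) - max (2 * Real.log (dist x x') - s - t) (|s - t|)| ≤
      2 * Real.log 2 := by
  set h := max (2 * Real.log (dist x x') - s - t) (|s - t|)
  have hsq : dist x x' ^ 2 / (Real.exp s * Real.exp t) =
      Real.exp (2 * Real.log (dist x x') - s - t) := by
    rw [sub_sub, Real.exp_sub, Real.exp_add, two_mul, Real.exp_add,
      Real.exp_log (dist_pos.2 hxx), sq]
  rw [hypDist_eq_arcosh, hsq]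
  set Y := (Real.exp (s - t) + Real.exp (t - s) + Real.exp (2 * Real.log (dist x x') - s - t)) / 2
    with hY
  have hh₁ : 2 * Real.log (dist x x') - s - t ≤ h := le_max_left _ _
  have hh₂ : |s - t| ≤ h := le_max_right _ _
  have hY₁ : 1 ≤ Y := by
    linarith [Real.add_one_le_exp (s - t), Real.add_one_le_exp (t - s),
      Real.exp_pos (2 * Real.log (dist x x') - s - t), hY]
  have hYlow : Real.exp h / 2 ≤ Y := by
    have := Real.exp_pos (s - t)
    have := Real.exp_pos (t - s)
    have := Real.exp_pos (2 * Real.log (dist x x') - s - t)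
    rcases max_choice (2 * Real.log (dist x x') - s - t) (|s - t|) with hm | hm <;>
      simp only [h, hm]
    · linarith [hY]
    · rcases abs_cases (s - t) with ⟨he, _⟩ | ⟨he, _⟩ <;> rw [he]
      · linarith [hY]
      · rw [neg_sub]; linarith [hY]
  have hYup : Y ≤ 2 * Real.exp h := by
    have e₁ := Real.exp_le_exp.2 ((le_abs_self (s - t)).trans hh₂)
    have e₂ := Real.exp_le_exp.2 (((le_abs_self (t - s)).trans_eq (abs_sub_comm t s)).trans hh₂)
    have e₃ := Real.exp_le_exp.2 hh₁
    linarith [hY]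
  have hlog : |Real.log Y - h| ≤ Real.log 2 := by
    have hl₁ := Real.log_le_log (by positivity) hYlow
    have hl₂ := Real.log_le_log (by positivity) hYup
    rw [Real.log_div (Real.exp_pos h).ne' two_ne_zero, Real.log_exp] at hl₁
    rw [Real.log_mul two_ne_zero (Real.exp_pos h).ne', Real.log_exp] at hl₂
    rw [abs_le]
    constructor <;> linarith
  calc |arcosh Y - h| ≤ |arcosh Y - Real.log Y| + |Real.log Y - h| := abs_sub_le _ _ _
    _ ≤ 2 * Real.log 2 := by linarith [abs_arcosh_sub_log_le hY₁]

lemma abs_hypDist_sub_max_log_div_le {m : ℕ} {x x' : EuclideanSpace ℝ (Fin m)} (hxx : x ≠ x')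
    {ε : ℝ} (hε : 0 < ε) (s t : ℝ) :
    |hypDist (x, s) (x', t) - max (2 * Real.log (dist x x' / ε) - s - t) (|s - t|)| ≤
      2 * Real.log 2 + 2 * |Real.log ε| := by
  have hshift : 2 * Real.log (dist x x') - s - t - (2 * Real.log (dist x x' / ε) - s - t) =
      2 * Real.log ε := by
    rw [Real.log_div (dist_pos.2 hxx).ne' hε.ne']
    ring
  have hmax := abs_max_sub_max_le_abs (2 * Real.log (dist x x') - s - t)
    (2 * Real.log (dist x x' / ε) - s - t) (|s - t|)
  rw [hshift, abs_mul, abs_two] at hmax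
  linarith [abs_hypDist_sub_max_le hxx s t, abs_sub_le (hypDist (x, s) (x', t))
    (max (2 * Real.log (dist x x') - s - t) (|s - t|))
    (max (2 * Real.log (dist x x' / ε) - s - t) (|s - t|))]

lemma abs_sub_le_or_le_abs_sub {a b a' b' s e d : ℝ} (hb : |(|b - a|) - s| ≤ e)
    (hb' : |(|b' - a'|) - s| ≤ e) (ha : |a - a'| ≤ d) :
    |b - b'| ≤ d + 2 * e ∨ 2 * s - 2 * e - d ≤ |b - b'| := by
  rw [abs_le] at hb hb' ha
  rcases abs_cases (b - a) with ⟨h, _⟩ | ⟨h, _⟩ <;>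
    rcases abs_cases (b' - a') with ⟨h', _⟩ | ⟨h', _⟩ <;> rw [h] at hb <;> rw [h'] at hb'
  · left; rw [abs_le]; constructor <;> linarith
  · right; rw [le_abs]; left; linarith
  · right; rw [le_abs]; right; linarith
  · left; rw [abs_le]; constructor <;> linarith

section GeodesicLines

variable {X : Type*} [MetricSpace X] {γ γ' ρ : ℝ → X} {T A δ : ℝ}

lemma Isometry.dist_eq_abs (hγ : Isometry γ) (s t : ℝ) : dist (γ s) (γ t) = |s - t| := by
  rw [hγ.dist_eq, Real.dist_eq]

lemma dist_le_two_mul_add_of_dist_le (hγ : Isometry γ) (hγ' : Isometry γ')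
    (hTop : ∀ u, T ≤ u → dist (γ u) (γ' u) ≤ A) (u u' : ℝ) :
    dist (γ u) (γ' u) ≤ 2 * dist (γ u) (γ' u') + A := by
  -- compare both points with the height `v`, above which the two lines stay `A`-close
  set v := max (max u u') T
  have hv : T ≤ v := le_max_right _ _
  have huv : u ≤ v := (le_max_left u u').trans (le_max_left _ _)
  have hu'v : u' ≤ v := (le_max_right u u').trans (le_max_left _ _)
  have h₁ := dist_triangle4 (γ u) (γ' u') (γ' v) (γ v)
  have h₂ := dist_triangle4 (γ' u') (γ u) (γ v) (γ' v)
  have h₃ := dist_triangle (γ u) (γ' u') (γ' u)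
  rw [hγ.dist_eq_abs, abs_of_nonpos (by linarith)] at h₂ h₁
  rw [hγ'.dist_eq_abs, abs_of_nonpos (by linarith)] at h₁ h₂
  rw [hγ'.dist_eq_abs] at h₃
  have := hTop v hv
  rw [dist_comm (γ' v)] at h₁
  rw [dist_comm (γ' u')] at h₂
  rcases abs_cases (u' - u) with ⟨h, _⟩ | ⟨h, _⟩ <;> rw [h] at h₃ <;> linarith

lemma exists_dist_le_of_infDist_le (hγ : Isometry γ) (hγ' : Isometry γ') (hδ : 0 < δ)
    (hslim : ∀ s, Metric.infDist (γ s) (Set.range γ' ∪ Set.range ρ) ≤ δ)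
    (hTop : ∀ u, T ≤ u → dist (γ u) (γ' u) ≤ A) {u : ℝ} (hu : 4 * δ + A ≤ dist (γ u) (γ' u)) :
    ∃ b, dist (γ u) (ρ b) ≤ 2 * δ := by
  obtain ⟨y, hy, hdy⟩ := (Metric.infDist_lt_iff ⟨γ' 0, Or.inl ⟨0, rfl⟩⟩).1
    ((hslim u).trans_lt (by linarith : δ < 2 * δ))
  rcases hy with ⟨u', rfl⟩ | ⟨b, rfl⟩
  · have := dist_le_two_mul_add_of_dist_le hγ hγ' hTop u u'
    linarith
  · exact ⟨b, hdy.le⟩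

lemma abs_abs_sub_sub_abs_sub_le (hγ : Isometry γ) (hρ : Isometry ρ) {u v b b' r : ℝ}
    (hu : dist (γ u) (ρ b) ≤ r) (hv : dist (γ v) (ρ b') ≤ r) :
    |(|b - b'|) - (|u - v|)| ≤ 2 * r := by
  have := dist_dist_dist_le (ρ b) (ρ b') (γ u) (γ v)
  rw [hρ.dist_eq_abs, hγ.dist_eq_abs, Real.dist_eq, dist_comm (ρ b), dist_comm (ρ b')] at this
  linarith

lemma two_mul_sub_le_dist_of_slim (hγ : Isometry γ) (hγ' : Isometry γ') (hρ : Isometry ρ)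
    (hδ : 0 < δ)
    (hslim : ∀ s, Metric.infDist (γ s) (Set.range γ' ∪ Set.range ρ) ≤ δ)
    (hslim' : ∀ s, Metric.infDist (γ' s) (Set.range γ ∪ Set.range ρ) ≤ δ)
    (hTop : ∀ u, T ≤ u → dist (γ u) (γ' u) ≤ A) {c₁ c₃ : ℝ} (hc₁ : 0 ≤ c₁) (hc₁₃ : c₁ ≤ c₃)
    (h₁ : ∀ u, u ≤ T - c₁ → 4 * δ + A ≤ dist (γ u) (γ' u))
    (h₃ : ∀ u, u ≤ T - c₃ → A + 2 * c₁ + 16 * δ < dist (γ u) (γ' u)) (t : ℝ) :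
    2 * (T - t) - max (2 * c₃) (4 * c₁ + A + 16 * δ) ≤ dist (γ t) (γ' t) := by
  rcases lt_or_ge (T - c₃) t with ht | ht
  · linarith [le_max_left (2 * c₃) (4 * c₁ + A + 16 * δ), dist_nonneg (x := γ t) (y := γ' t)]
  set t₀ := T - c₁
  have hTop' : ∀ u, T ≤ u → dist (γ' u) (γ u) ≤ A := fun u hu => dist_comm (γ' u) _ ▸ hTop u hu
  -- below `t₀` both lines are too far apart to be `δ`-close to each other, so they follow `ρ`
  obtain ⟨b, hb⟩ := exists_dist_le_of_infDist_le hγ hγ' hδ hslim hTop (h₁ t (by linarith))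
  obtain ⟨b₀, hb₀⟩ := exists_dist_le_of_infDist_le hγ hγ' hδ hslim hTop (h₁ t₀ le_rfl)
  obtain ⟨b', hb'⟩ := exists_dist_le_of_infDist_le hγ' hγ hδ hslim' hTop'
    (dist_comm (γ t) (γ' t) ▸ h₁ t (by linarith))
  obtain ⟨b₀', hb₀'⟩ := exists_dist_le_of_infDist_le hγ' hγ hδ hslim' hTop'
    (dist_comm (γ t₀) (γ' t₀) ▸ h₁ t₀ le_rfl)
  have hD₀ : dist (γ t₀) (γ' t₀) ≤ A + 2 * c₁ := by
    have := dist_triangle4 (γ t₀) (γ T) (γ' T) (γ' t₀)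
    rw [hγ.dist_eq_abs, hγ'.dist_eq_abs, abs_of_nonpos (by linarith),
      abs_of_nonneg (by linarith)] at this
    linarith [hTop T le_rfl]
  have hpar := abs_abs_sub_sub_abs_sub_le hγ hρ hb hb₀
  have hpar' := abs_abs_sub_sub_abs_sub_le hγ' hρ hb' hb₀'
  rw [abs_of_nonpos (by linarith : t - t₀ ≤ 0), neg_sub] at hpar hpar'
  have hbase : |b₀ - b₀'| ≤ A + 2 * c₁ + 4 * δ := by
    have := dist_triangle4 (ρ b₀) (γ t₀) (γ' t₀) (ρ b₀')
    rw [hρ.dist_eq_abs, dist_comm (ρ b₀)] at this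
    linarith
  have hDt : |dist (γ t) (γ' t) - (|b - b'|)| ≤ 4 * δ := by
    have := dist_dist_dist_le (γ t) (γ' t) (ρ b) (ρ b')
    rw [hρ.dist_eq_abs, Real.dist_eq] at this
    linarith
  rw [abs_le] at hDt
  -- if `b` and `b'` lay on the same side of `b₀ ≈ b₀'`, then `γ t` and `γ' t` would be close
  rcases abs_sub_le_or_le_abs_sub hpar hpar' hbase with hclose | hfar
  · linarith [h₃ t ht]
  · linarith [le_max_right (2 * c₃) (4 * c₁ + A + 16 * δ)]

lemma abs_dist_sub_max_le (hγ : Isometry γ) (hγ' : Isometry γ')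
    (hTop : ∀ u, T ≤ u → dist (γ u) (γ' u) ≤ A) {C : ℝ}
    (hLow : ∀ u, 2 * (T - u) - C ≤ dist (γ u) (γ' u)) (s t : ℝ) :
    |dist (γ s) (γ' t) - max (2 * T - s - t) (|s - t|)| ≤ max A C := by
  have hA := le_max_left A C
  have hC := le_max_right A C
  have hup : ∀ M, s ≤ M → t ≤ M → T ≤ M → dist (γ s) (γ' t) ≤ 2 * M - s - t + A := by
    intro M hs ht hT
    have := dist_triangle4 (γ s) (γ M) (γ' M) (γ' t)
    rw [hγ.dist_eq_abs, hγ'.dist_eq_abs, abs_of_nonpos (by linarith),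
      abs_of_nonneg (by linarith)] at this
    linarith [hTop M hT]
  have hγst := hγ.dist_eq_abs s t
  have hγ'st := hγ'.dist_eq_abs s t
  have h₁ := dist_triangle (γ s) (γ' t) (γ' s)
  have h₂ := dist_triangle (γ t) (γ s) (γ' t)
  have h₃ := dist_triangle (γ s) (γ' t) (γ t)
  have h₄ := dist_triangle (γ' s) (γ s) (γ' t)
  rw [dist_comm (γ' t) (γ' s)] at h₁
  rw [dist_comm (γ t) (γ s)] at h₂
  rw [dist_comm (γ' t) (γ t)] at h₃
  rw [dist_comm (γ' s) (γ s)] at h₄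
  rw [abs_sub_le_iff]
  -- the lower bound compares with the pair at height `min s t` below `T`, `max s t` above it
  rcases le_total s t with hst | hst
  · rw [abs_of_nonpos (sub_nonpos.2 hst)] at hγst hγ'st ⊢
    rcases le_total T t with hT | hT
    · rw [max_eq_right (by linarith)]
      exact ⟨by linarith [hup t hst le_rfl hT], by linarith [hTop t hT]⟩
    · rw [max_eq_left (by linarith)]
      exact ⟨by linarith [hup T (by linarith) hT le_rfl], by linarith [hLow s]⟩
  · rw [abs_of_nonneg (sub_nonneg.2 hst)] at hγst hγ'st ⊢
    rcases le_total T s with hT | hT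
    · rw [max_eq_right (by linarith)]
      exact ⟨by linarith [hup s le_rfl hst hT], by linarith [hTop s hT]⟩
    · rw [max_eq_left (by linarith)]
      exact ⟨by linarith [hup T hT (by linarith) le_rfl], by linarith [hLow t]⟩

end GeodesicLines

lemma exists_forall_le_of_tendsto_atTop {ι : Type*} {φ ψ : ι → ℝ}
    (h : ∀ i : ℕ → ι, Tendsto (φ ∘ i) atTop atTop → Tendsto (ψ ∘ i) atTop atTop) (N : ℝ) :
    ∃ L, ∀ i, L ≤ φ i → N ≤ ψ i := by
  by_contra! hN
  choose i hφ hψ using hN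
  have hi : Tendsto (φ ∘ fun k : ℕ => i k) atTop atTop :=
    tendsto_atTop_mono (fun k => hφ k) tendsto_natCast_atTop_atTop
  obtain ⟨k, hk⟩ := ((h _ hi).eventually_ge_atTop N).exists
  exact (hψ k).not_ge hk

lemma Real.exp_neg_mul_eq {a ε : ℝ} (ha : 0 < a) (hε : 0 < ε) (u : ℝ) :
    Real.exp (-u) * a = ε * Real.exp (Real.log (a / ε) - u) := by
  rw [Real.exp_sub, Real.exp_log (div_pos ha hε), Real.exp_neg]
  field_simp

section VerticalGeodesics

variable {E X : Type*} [MetricSpace E] [MetricSpace X] {F : E × ℝ → X} {ε : ℝ}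

lemma dist_le_add_two_of_log_div_le {R : ℝ} (hε : 0 < ε)
    (h1 : ∀ x s t, dist (F (x, s)) (F (x, t)) = |s - t|)
    (h3 : ∀ x x' t, Real.exp (-t) * dist x x' < ε → dist (F (x, t)) (F (x', t)) ≤ R)
    {x x' : E} (hxx : x ≠ x') {u : ℝ} (hu : Real.log (dist x x' / ε) ≤ u) :
    dist (F (x, u)) (F (x', u)) ≤ R + 2 := by
  have hR := h3 x x' (u + 1) <| by
    rw [Real.exp_neg_mul_eq (dist_pos.2 hxx) hε]
    exact mul_lt_of_lt_one_right hε (Real.exp_lt_one_iff.2 (by linarith))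
  have := dist_triangle4 (F (x, u)) (F (x, u + 1)) (F (x', u + 1)) (F (x', u))
  rw [h1, h1, show u - (u + 1) = -1 by ring, add_sub_cancel_left, abs_neg, abs_one] at this
  linarith

lemma exists_le_dist_of_le_log_div_sub (hε : 0 < ε)
    (h4 : ∀ (x x' : ℕ → E) (t : ℕ → ℝ),
      Tendsto (fun k => Real.exp (-(t k)) * dist (x k) (x' k)) atTop atTop →
      Tendsto (fun k => dist (F (x k, t k)) (F (x' k, t k))) atTop atTop) (N : ℝ) :
    ∃ c, ∀ x x' u, x ≠ x' → u ≤ Real.log (dist x x' / ε) - c →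
      N ≤ dist (F (x, u)) (F (x', u)) := by
  obtain ⟨L, hL⟩ := exists_forall_le_of_tendsto_atTop
    (φ := fun p : E × E × ℝ => Real.exp (-p.2.2) * dist p.1 p.2.1)
    (ψ := fun p => dist (F (p.1, p.2.2)) (F (p.2.1, p.2.2)))
    (fun i => h4 (fun k => (i k).1) (fun k => (i k).2.1) (fun k => (i k).2.2)) N
  refine ⟨L / ε, fun x x' u hxx hu => hL (x, x', u) ?_⟩
  rw [Real.exp_neg_mul_eq (dist_pos.2 hxx) hε]
  calc L ≤ ε * (L / ε + 1) := by rw [mul_add, mul_div_cancel₀ L hε.ne']; linarith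
    _ ≤ ε * Real.exp (L / ε) := by gcongr; exact Real.add_one_le_exp _
    _ ≤ ε * Real.exp (Real.log (dist x x' / ε) - u) := by gcongr; linarith

end VerticalGeodesics

theorem criteria_lemma_general {X : Type*} [MetricSpace X] {m : ℕ}
    (δ ε R : ℝ) (hδ : 0 < δ) (hε : 0 < ε)
    (F : EuclideanSpace ℝ (Fin m) × ℝ → X)
    -- (1) each vertical line maps to a geodesic
    (h1 : ∀ (x : EuclideanSpace ℝ (Fin m)) (s t : ℝ),
      dist (F (x, s)) (F (x, t)) = |s - t|)
    -- (2) two sides of an ideal δ-slim triangle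
    (h2 : ∀ x x' : EuclideanSpace ℝ (Fin m), x ≠ x' → ∃ Rside : ℝ → X,
      (∀ s t : ℝ, dist (Rside s) (Rside t) = |s - t|) ∧
      (∀ s : ℝ, Metric.infDist (F (x, s))
        (Set.range (fun u => F (x', u)) ∪ Set.range Rside) ≤ δ) ∧
      (∀ s : ℝ, Metric.infDist (F (x', s))
        (Set.range (fun u => F (x, u)) ∪ Set.range Rside) ≤ δ) ∧
      (∀ s : ℝ, Metric.infDist (Rside s)
        (Set.range (fun u => F (x, u)) ∪ Set.range (fun u => F (x', u))) ≤ δ))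
    -- (3) uniform bound at small scaled horizontal distance
    (h3 : ∀ (x x' : EuclideanSpace ℝ (Fin m)) (t : ℝ),
      Real.exp (-t) * dist x x' < ε → dist (F (x, t)) (F (x', t)) ≤ R)
    -- (4) properness along horizontal scales
    (h4 : ∀ (x x' : ℕ → EuclideanSpace ℝ (Fin m)) (t : ℕ → ℝ),
      Tendsto (fun k => Real.exp (-(t k)) * dist (x k) (x' k)) atTop atTop →
      Tendsto (fun k => dist (F (x k, t k)) (F (x' k, t k))) atTop atTop) :
    ∃ K : ℝ, ∀ p q : EuclideanSpace ℝ (Fin m) × ℝ,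
      |hypDist p q - dist (F p) (F q)| ≤ K := by
  have hF : ∀ x, Isometry fun t => F (x, t) :=
    fun x => Isometry.of_dist_eq fun s t => by rw [h1, Real.dist_eq]
  choose c hc using exists_le_dist_of_le_log_div_sub hε h4
  obtain ⟨c₁, hc₁, hN₁⟩ : ∃ c₁, 0 ≤ c₁ ∧ c (4 * δ + (R + 2)) ≤ c₁ :=
    ⟨_, le_max_left _ _, le_max_right _ _⟩
  obtain ⟨c₃, hc₁₃, hN₃⟩ : ∃ c₃, c₁ ≤ c₃ ∧ c (R + 2 + 2 * c₁ + 16 * δ + 1) ≤ c₃ :=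
    ⟨_, le_max_left _ _, le_max_right _ _⟩
  set C := max (2 * c₃) (4 * c₁ + (R + 2) + 16 * δ)
  refine ⟨max (R + 2) C + 2 * |Real.log ε| + 2 * Real.log 2, ?_⟩
  rintro ⟨x, s⟩ ⟨x', t⟩
  rcases eq_or_ne x x' with rfl | hxx
  · rw [hypDist_vertical, h1, sub_self, abs_zero]
    have : 0 ≤ C := le_max_of_le_left (by linarith)
    linarith [le_max_right (R + 2) C, abs_nonneg (Real.log ε), Real.log_nonneg one_le_two]
  obtain ⟨ρ, hρ, hslim, hslim', -⟩ := h2 x x' hxx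
  have hTop := fun u => dist_le_add_two_of_log_div_le hε h1 h3 hxx (u := u)
  have hLow := two_mul_sub_le_dist_of_slim (hF x) (hF x')
    (Isometry.of_dist_eq fun s t => by rw [hρ, Real.dist_eq]) hδ hslim hslim' hTop hc₁ hc₁₃
    (fun u hu => hc _ x x' u hxx (by linarith))
    (fun u hu => by linarith [hc (R + 2 + 2 * c₁ + 16 * δ + 1) x x' u hxx (by linarith)])
  have hX := abs_dist_sub_max_le (C := C) (hF x) (hF x') hTop hLow s t
  rw [abs_sub_comm] at hX
  linarith [abs_hypDist_sub_max_log_div_le hxx hε s t, abs_sub_le (hypDist (x, s) (x', t))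
    (max (2 * Real.log (dist x x' / ε) - s - t) (|s - t|)) (dist (F (x, s)) (F (x', t)))]

/-- the criteria lemma: a map `F : ℍⁿ → X` (exponential model) to a
geodesic metric space sending vertical lines to geodesics, with any two such image
geodesics two sides of an ideal `δ`-slim triangle, with a uniform bound `R` on images
of horizontally `ε`-close points, and proper on horizontal scales, is a
`K`-almost-isometric embedding for some `K`. -/
theorem criteria_lemma {X : Type*} [MetricSpace X] {m : ℕ}
    (hgeo : ∀ a b : X, ∃ γ : ℝ → X, γ 0 = a ∧ γ (dist a b) = b ∧
      ∀ s ∈ Set.Icc (0 : ℝ) (dist a b), ∀ u ∈ Set.Icc (0 : ℝ) (dist a b),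
        dist (γ s) (γ u) = |s - u|)
    (δ ε R : ℝ) (hδ : 0 < δ) (hε : 0 < ε) (hR : 0 < R)
    (F : EuclideanSpace ℝ (Fin m) × ℝ → X)
    -- (1) each vertical line maps to a geodesic
    (h1 : ∀ (x : EuclideanSpace ℝ (Fin m)) (s t : ℝ),
      dist (F (x, s)) (F (x, t)) = |s - t|)
    -- (2) two sides of an ideal δ-slim triangle
    (h2 : ∀ x x' : EuclideanSpace ℝ (Fin m), x ≠ x' → ∃ Rside : ℝ → X,
      (∀ s t : ℝ, dist (Rside s) (Rside t) = |s - t|) ∧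
      (∀ s : ℝ, Metric.infDist (F (x, s))
        (Set.range (fun u => F (x', u)) ∪ Set.range Rside) ≤ δ) ∧
      (∀ s : ℝ, Metric.infDist (F (x', s))
        (Set.range (fun u => F (x, u)) ∪ Set.range Rside) ≤ δ) ∧
      (∀ s : ℝ, Metric.infDist (Rside s)
        (Set.range (fun u => F (x, u)) ∪ Set.range (fun u => F (x', u))) ≤ δ))
    -- (3) uniform bound at small scaled horizontal distance
    (h3 : ∀ (x x' : EuclideanSpace ℝ (Fin m)) (t : ℝ),
      Real.exp (-t) * dist x x' < ε → dist (F (x, t)) (F (x', t)) ≤ R)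
    -- (4) properness along horizontal scales
    (h4 : ∀ (x x' : ℕ → EuclideanSpace ℝ (Fin m)) (t : ℕ → ℝ),
      Tendsto (fun k => Real.exp (-(t k)) * dist (x k) (x' k)) atTop atTop →
      Tendsto (fun k => dist (F (x k, t k)) (F (x' k, t k))) atTop atTop) :
    ∃ K : ℝ, ∀ p q : EuclideanSpace ℝ (Fin m) × ℝ,
      |hypDist p q - dist (F p) (F q)| ≤ K :=
  criteria_lemma_general δ ε R hδ hε F h1 h2 h3 h4
end

section
/- Under the hypotheses of the criteria lemma (F : ℍⁿ → X with geodesic vertical lines, δ-slim ideal triangles, and the horizontal bound d_X(F(x,t),F(x',t)) ≤ R when e^{-t}|x-x'| < ε), set Δ = max{3δ, 2R/ε + R}. For any vertical ideal triangle T with vertical sides over x, x' and displaced height h_T = min{t : d_X(F(x,t),F(η_{x'})) ≤ Δ or d_X(F(η_x),F(x',t)) ≤ Δ}, one has d_X(F(x,h_T),F(x',h_T)) ≤ 3Δ. -/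
private lemma displaced_aux {X : Type*} [MetricSpace X] (Δ η : ℝ) (f g : ℝ → X)
    (hf : ∀ s t : ℝ, dist (f s) (f t) = |s - t|)
    (hg : ∀ s t : ℝ, dist (g s) (g t) = |s - t|)
    (hT T s : ℝ) (hs : s ≤ T) (hh : hT ≤ T)
    (hc : dist (f T) (g T) ≤ Δ)
    (hB : dist (f hT) (g s) ≤ Δ + η) :
    dist (f hT) (g hT) ≤ 3 * Δ + 2 * η := by
  have e1 : dist (g s) (g T) = T - s := by
    rw [hg, abs_sub_comm, abs_of_nonneg (by linarith)]
  have e2 : dist (f hT) (f T) = T - hT := by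
    rw [hf, abs_sub_comm, abs_of_nonneg (by linarith)]
  have e3 : dist (g s) (g hT) = |s - hT| := hg s hT
  have t1 : dist (g s) (g T) ≤ dist (g s) (f hT) + dist (f hT) (f T) + dist (f T) (g T) :=
    dist_triangle4 _ _ _ _
  have t2 : dist (f hT) (f T) ≤ dist (f hT) (g s) + dist (g s) (g T) + dist (g T) (f T) :=
    dist_triangle4 _ _ _ _
  have t3 : dist (f hT) (g hT) ≤ dist (f hT) (g s) + dist (g s) (g hT) := dist_triangle _ _ _
  have hd : dist (g s) (f hT) = dist (f hT) (g s) := dist_comm _ _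
  have hd2 : dist (g T) (f T) = dist (f T) (g T) := dist_comm _ _
  have habs : |s - hT| ≤ 2 * Δ + η := abs_le.2 ⟨by linarith, by linarith⟩
  linarith

/-- Claim: slimness above the displaced height: under the hypotheses of
the criteria lemma, with `Δ = max{3δ, 2R/ε + R}` and `h_T` the displaced height of the
vertical ideal triangle over `x, x'`, one has `d_X(F(x,h_T),F(x',h_T)) ≤ 3Δ`. -/
theorem displaced_height_claim {X : Type*} [MetricSpace X] {m : ℕ}
    (δ ε R : ℝ) (hδ : 0 < δ) (hε : 0 < ε) (hR : 0 < R)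
    (F : EuclideanSpace ℝ (Fin m) × ℝ → X)
    -- vertical lines map to geodesics
    (h1 : ∀ (x : EuclideanSpace ℝ (Fin m)) (s t : ℝ),
      dist (F (x, s)) (F (x, t)) = |s - t|)
    -- ideal δ-slim triangles
    (h2 : ∀ x x' : EuclideanSpace ℝ (Fin m), x ≠ x' → ∃ Rside : ℝ → X,
      (∀ s t : ℝ, dist (Rside s) (Rside t) = |s - t|) ∧
      (∀ s : ℝ, Metric.infDist (F (x, s))
        (Set.range (fun u => F (x', u)) ∪ Set.range Rside) ≤ δ) ∧
      (∀ s : ℝ, Metric.infDist (F (x', s))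
        (Set.range (fun u => F (x, u)) ∪ Set.range Rside) ≤ δ) ∧
      (∀ s : ℝ, Metric.infDist (Rside s)
        (Set.range (fun u => F (x, u)) ∪ Set.range (fun u => F (x', u))) ≤ δ))
    -- horizontal bound
    (h3 : ∀ (x x' : EuclideanSpace ℝ (Fin m)) (t : ℝ),
      dist (F (x, t)) (F (x', t)) ≤ (R / ε) * (Real.exp (-t) * dist x x') + R)
    (Δ : ℝ) (hΔ : Δ = max (3 * δ) (2 * R / ε + R))
    (x x' : EuclideanSpace ℝ (Fin m)) (hxx : x ≠ x')
    (hT : ℝ)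
    -- h_T belongs to the defining set of the displaced height…
    (hmem : Metric.infDist (F (x, hT)) (Set.range fun s => F (x', s)) ≤ Δ ∨
      Metric.infDist (F (x', hT)) (Set.range fun s => F (x, s)) ≤ Δ)
    -- …and is its minimum
    (hmin : ∀ t : ℝ,
      (Metric.infDist (F (x, t)) (Set.range fun s => F (x', s)) ≤ Δ ∨
        Metric.infDist (F (x', t)) (Set.range fun s => F (x, s)) ≤ Δ) → hT ≤ t) :
    dist (F (x, hT)) (F (x', hT)) ≤ 3 * Δ := by
  have hd0 : (0 : ℝ) < dist x x' := dist_pos.2 hxx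
  have hRε : (0 : ℝ) ≤ R / ε := by positivity
  have hΔ2 : 2 * R / ε + R ≤ Δ := hΔ ▸ le_max_right _ _
  refine le_of_forall_pos_le_add fun c hc => ?_
  -- the height at which the two vertical geodesics fellow-travel
  have key : ∀ T : ℝ, Real.log (dist x x') ≤ T → dist (F (x, T)) (F (x', T)) ≤ Δ := by
    intro T hlT
    have hexp : Real.exp (-T) * dist x x' ≤ 1 := by
      have h4 : Real.exp (-T) ≤ (dist x x')⁻¹ := by
        rw [← Real.exp_log hd0, ← Real.exp_neg]
        exact Real.exp_le_exp.2 (by linarith)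
      calc Real.exp (-T) * dist x x' ≤ (dist x x')⁻¹ * dist x x' :=
            mul_le_mul_of_nonneg_right h4 hd0.le
        _ = 1 := inv_mul_cancel₀ hd0.ne'
    have h5 : R / ε * (Real.exp (-T) * dist x x') ≤ R / ε * 1 :=
      mul_le_mul_of_nonneg_left hexp hRε
    have h6 : R / ε ≤ 2 * R / ε := by
      rw [div_le_div_iff₀ hε hε]
      nlinarith
    have h7 := h3 x x' T
    linarith
  rcases hmem with hm | hm
  · have hne : (Set.range fun s : ℝ => F (x', s)).Nonempty := Set.range_nonempty _
    have hlt : Metric.infDist (F (x, hT)) (Set.range fun s : ℝ => F (x', s)) < Δ + c / 2 :=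
      lt_of_le_of_lt hm (by linarith)
    obtain ⟨y, ⟨s, rfl⟩, hy⟩ := (Metric.infDist_lt_iff hne).1 hlt
    set T := max (max s hT) (Real.log (dist x x')) with hTdef
    have hsT : s ≤ T := le_trans (le_max_left _ _) (le_max_left _ _)
    have hhT : hT ≤ T := le_trans (le_max_right _ _) (le_max_left _ _)
    have hclose := key T (le_max_right _ _)
    have := displaced_aux Δ (c / 2) (fun t => F (x, t)) (fun t => F (x', t))
      (fun a b => h1 x a b) (fun a b => h1 x' a b) hT T s hsT hhT hclose hy.le
    linarith
  · have hne : (Set.range fun s : ℝ => F (x, s)).Nonempty := Set.range_nonempty _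
    have hlt : Metric.infDist (F (x', hT)) (Set.range fun s : ℝ => F (x, s)) < Δ + c / 2 :=
      lt_of_le_of_lt hm (by linarith)
    obtain ⟨y, ⟨s, rfl⟩, hy⟩ := (Metric.infDist_lt_iff hne).1 hlt
    set T := max (max s hT) (Real.log (dist x x')) with hTdef
    have hsT : s ≤ T := le_trans (le_max_left _ _) (le_max_left _ _)
    have hhT : hT ≤ T := le_trans (le_max_right _ _) (le_max_left _ _)
    have hclose : dist (F (x', T)) (F (x, T)) ≤ Δ := by
      rw [dist_comm]; exact key T (le_max_right _ _)
    have := displaced_aux Δ (c / 2) (fun t => F (x', t)) (fun t => F (x, t))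
      (fun a b => h1 x' a b) (fun a b => h1 x a b) hT T s hsT hhT hclose hy.le
    rw [dist_comm] at this
    linarith
end

section
/- Let c : ℝ → S be a path in a Riemannian surface S contained in a single leaf of a singular foliation, parameterized by arc-length, and let z = c(0). Then for every x ∈ ℝ there exists an isotopy f^x : S → S, depending continuously on x, with f⁰ = id, f^x(z) = c(x), and each f^x preserving the foliation, constructed by covering the compact arc c([0,x]) by finitely many foliated balls and composing flows of unit vector fields tangent to the foliation supported in those balls. -/
/-!
Pushes along `c` compose pointwise: if `h₁` moves `c a` to `c x` for `x ∈ [a, b]` and is frozen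
afterwards, and `h₂` is the identity up to time `b` and then moves `c b` onwards, then `h₂ ∘ h₁`
pushes from `a` past `b`. A local flow, renormalised by the inverse of one of its time-`t` maps,
is such a push on every short interval, so by connectedness of `ℝ` every interval `[u, w]` admits
one. Chaining pushes over `[n, n + 1]` gives a push along the ray `[0, ∞)` that stabilises on
bounded times; doing the same for `x ↦ c (-x)` and composing handles negative times.
-/

open Set Filter Topology

section LeafPush

variable {S : Type*} {leaf : S → Set S} {c : ℝ → S}

theorem mem_leaf_trans (hpart : ∀ p q : S, q ∈ leaf p → leaf q = leaf p) {p q r : S}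
    (hq : q ∈ leaf p) (hr : r ∈ leaf q) : r ∈ leaf p :=
  hpart p q hq ▸ hr

theorem mem_leaf_comm (hpart : ∀ p q : S, q ∈ leaf p → leaf q = leaf p)
    (hmem : ∀ p : S, p ∈ leaf p) {p q : S} (hq : q ∈ leaf p) : p ∈ leaf q :=
  hpart p q hq ▸ hmem p

def pushChain (K : ℕ → ℝ → S → S) : ℕ → ℝ → S → S
  | 0 => fun _ => id
  | n + 1 => fun x => K n x ∘ pushChain K n x

theorem pushChain_eq_of_le {K : ℕ → ℝ → S → S} (hK : ∀ (n : ℕ) (x : ℝ), x ≤ n → K n x = id)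
    {n m : ℕ} (hnm : n ≤ m) {x : ℝ} (hx : x ≤ n) : pushChain K m x = pushChain K n x := by
  induction m, hnm using Nat.le_induction with
  | base => rfl
  | succ m hnm ih =>
    simp only [pushChain, ih, hK m x (hx.trans (by exact_mod_cast hnm)), Function.id_comp]

variable [TopologicalSpace S]

theorem Homeomorph.symm_mem_leaf (hpart : ∀ p q : S, q ∈ leaf p → leaf q = leaf p)
    (hmem : ∀ p : S, p ∈ leaf p) (E : S ≃ₜ S) (hE : ∀ p, E p ∈ leaf p) (p : S) :
    E.symm p ∈ leaf p :=
  mem_leaf_comm hpart hmem <| by simpa only [E.apply_symm_apply] using hE (E.symm p)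

structure IsLeafIsotopy (leaf : S → Set S) (h : ℝ → S → S) : Prop where
  continuous : Continuous fun q : ℝ × S => h q.1 q.2
  isHomeomorph : ∀ x, IsHomeomorph (h x)
  mem_leaf : ∀ x p, h x p ∈ leaf p

structure IsLeafPush (leaf : S → Set S) (c : ℝ → S) (a b : ℝ) (h : ℝ → S → S) : Prop
    extends IsLeafIsotopy leaf h where
  eq_id : ∀ x ≤ a, h x = id
  eq_of_ge : ∀ x, b ≤ x → h x = h b
  apply_start : ∀ x ∈ Icc a b, h x (c a) = c x

def IsLocallyPushable (leaf : S → Set S) (c : ℝ → S) : Prop :=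
  ∀ x₀ : ℝ, ∃ (g : ℝ → S → S) (p : S), IsLeafIsotopy leaf g ∧ ∀ᶠ x in 𝓝 x₀, g x p = c x

theorem isLeafIsotopy_const (hpart : ∀ p q : S, q ∈ leaf p → leaf q = leaf p)
    (hmem : ∀ p : S, p ∈ leaf p) (E : S ≃ₜ S) (hE : ∀ p, E p ∈ leaf p) :
    IsLeafIsotopy leaf fun _ => E.symm :=
  ⟨E.symm.continuous.comp continuous_snd, fun _ => E.symm.isHomeomorph,
    fun _ => E.symm_mem_leaf hpart hmem hE⟩

namespace IsLeafIsotopy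

variable {h h₁ h₂ : ℝ → S → S}

theorem comp (hpart : ∀ p q : S, q ∈ leaf p → leaf q = leaf p) (hh₁ : IsLeafIsotopy leaf h₁)
    (hh₂ : IsLeafIsotopy leaf h₂) : IsLeafIsotopy leaf fun x => h₂ x ∘ h₁ x :=
  ⟨hh₂.continuous.comp (continuous_fst.prodMk hh₁.continuous),
    fun x => (hh₂.isHomeomorph x).comp (hh₁.isHomeomorph x),
    fun x p => mem_leaf_trans hpart (hh₁.mem_leaf x p) (hh₂.mem_leaf x _)⟩

theorem comp_continuous (hh : IsLeafIsotopy leaf h) {φ : ℝ → ℝ} (hφ : Continuous φ) :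
    IsLeafIsotopy leaf fun x => h (φ x) :=
  ⟨hh.continuous.comp ((hφ.comp continuous_fst).prodMk continuous_snd),
    fun x => hh.isHomeomorph (φ x), fun x => hh.mem_leaf (φ x)⟩

theorem exists_isLeafPush (hpart : ∀ p q : S, q ∈ leaf p → leaf q = leaf p)
    (hmem : ∀ p : S, p ∈ leaf p) (hh : IsLeafIsotopy leaf h) {p₀ : S} {u w : ℝ}
    (huw : u ≤ w) (hc : ∀ x ∈ Icc u w, h x p₀ = c x) : ∃ k, IsLeafPush leaf c u w k := by
  obtain ⟨E, hE⟩ := isHomeomorph_iff_exists_homeomorph.mp (hh.isHomeomorph u)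
  have hE_leaf : ∀ p, E p ∈ leaf p := hE ▸ hh.mem_leaf u
  have hE_start : E.symm (c u) = p₀ := by
    rw [E.symm_apply_eq, hE, hc u (left_mem_Icc.mpr huw)]
  refine ⟨fun x => h (projIcc u w huw x) ∘ E.symm,
    (isLeafIsotopy_const hpart hmem E hE_leaf).comp hpart
      (hh.comp_continuous (continuous_subtype_val.comp continuous_projIcc)), ?_, ?_, ?_⟩
  · intro x hx
    rw [projIcc_of_le_left huw hx, ← hE, E.self_comp_symm]
  · intro x hx
    rw [projIcc_of_right_le huw hx, projIcc_right]
  · intro x hx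
    simp only [Function.comp_apply, projIcc_of_mem huw hx, hE_start, hc x hx]

end IsLeafIsotopy

namespace IsLeafPush

variable {h h₁ h₂ : ℝ → S → S} {a b d : ℝ}

theorem id (hmem : ∀ p : S, p ∈ leaf p) (a : ℝ) : IsLeafPush leaf c a a fun _ => _root_.id where
  continuous := continuous_snd
  isHomeomorph _ := IsHomeomorph.id
  mem_leaf _ := hmem
  eq_id _ _ := rfl
  eq_of_ge _ _ := rfl
  apply_start x hx := by rw [Icc_self, mem_singleton_iff] at hx; rw [hx]; rfl

theorem trans (hpart : ∀ p q : S, q ∈ leaf p → leaf q = leaf p) (hab : a ≤ b) (hbd : b ≤ d)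
    (hh₁ : IsLeafPush leaf c a b h₁) (hh₂ : IsLeafPush leaf c b d h₂) :
    IsLeafPush leaf c a d fun x => h₂ x ∘ h₁ x where
  toIsLeafIsotopy := hh₁.toIsLeafIsotopy.comp hpart hh₂.toIsLeafIsotopy
  eq_id x hx := by rw [hh₁.eq_id x hx, hh₂.eq_id x (hx.trans hab)]; rfl
  eq_of_ge x hx := by rw [hh₁.eq_of_ge x (hbd.trans hx), hh₂.eq_of_ge x hx, hh₁.eq_of_ge d hbd]
  apply_start x hx := by
    rcases le_total x b with hxb | hbx
    · rw [Function.comp_apply, hh₂.eq_id x hxb, hh₁.apply_start x ⟨hx.1, hxb⟩]; rfl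
    · rw [Function.comp_apply, hh₁.eq_of_ge x hbx, hh₁.apply_start b ⟨hab, le_rfl⟩,
        hh₂.apply_start x ⟨hbx, hx.2⟩]

theorem exists_restrict (hpart : ∀ p q : S, q ∈ leaf p → leaf q = leaf p)
    (hmem : ∀ p : S, p ∈ leaf p) (hh : IsLeafPush leaf c a b h) {u w : ℝ} (hau : a ≤ u)
    (huw : u ≤ w) (hwb : w ≤ b) : ∃ k, IsLeafPush leaf c u w k :=
  hh.toIsLeafIsotopy.exists_isLeafPush hpart hmem huw fun x hx =>
    hh.apply_start x ⟨hau.trans hx.1, hx.2.trans hwb⟩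

end IsLeafPush

theorem isLeafPush_pushChain (hpart : ∀ p q : S, q ∈ leaf p → leaf q = leaf p)
    (hmem : ∀ p : S, p ∈ leaf p) {K : ℕ → ℝ → S → S}
    (hK : ∀ n : ℕ, IsLeafPush leaf c n (n + 1) (K n)) :
    ∀ n : ℕ, IsLeafPush leaf c 0 n (pushChain K n)
  | 0 => by exact_mod_cast IsLeafPush.id hmem 0
  | n + 1 => by
    rw [Nat.cast_succ]
    show IsLeafPush leaf c 0 (n + 1) fun x => K n x ∘ pushChain K n x
    exact (isLeafPush_pushChain hpart hmem hK n).trans hpart n.cast_nonneg (by simp) (hK n)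

theorem continuous_natCeil_of_stabilizing {Y : Type*} [TopologicalSpace Y] {P : ℕ → ℝ → S → Y}
    (hP : ∀ n, Continuous fun q : ℝ × S => P n q.1 q.2)
    (hstab : ∀ {n m : ℕ} {x : ℝ}, n ≤ m → x ≤ n → P m x = P n x) :
    Continuous fun q : ℝ × S => P ⌈q.1⌉₊ q.1 q.2 := by
  refine continuous_iff_continuousAt.mpr fun q₀ => ?_
  have hq₀ : q₀.1 < (⌈q₀.1⌉₊ + 1 : ℕ) := by push_cast; linarith [Nat.le_ceil q₀.1]
  refine (hP (⌈q₀.1⌉₊ + 1)).continuousAt.congr ?_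
  filter_upwards [continuous_fst.continuousAt.eventually (gt_mem_nhds hq₀)] with q hq
  rw [hstab (Nat.ceil_le.mpr hq.le) (Nat.le_ceil q.1)]

namespace IsLocallyPushable

theorem comp_neg (hc : IsLocallyPushable leaf c) : IsLocallyPushable leaf fun x => c (-x) := by
  intro x₀
  obtain ⟨g, p, hg, hgc⟩ := hc (-x₀)
  exact ⟨fun x => g (-x), p, hg.comp_continuous continuous_neg,
    (continuous_neg.tendsto' x₀ (-x₀) rfl).eventually hgc⟩

theorem exists_isLeafPush (hpart : ∀ p q : S, q ∈ leaf p → leaf q = leaf p)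
    (hmem : ∀ p : S, p ∈ leaf p) (hc : IsLocallyPushable leaf c) {u w : ℝ} (huw : u ≤ w) :
    ∃ h, IsLeafPush leaf c u w h := by
  let P : ℝ → ℝ → Prop := fun u w => u ≤ w → ∃ h, IsLeafPush leaf c u w h
  refine PreconnectedSpace.induction₂' P (fun x₀ => ?_) ⟨fun u v w huv hvw huw => ?_⟩ u w huw
  · obtain ⟨g, p, hg, hgc⟩ := hc x₀
    obtain ⟨l, r, hx₀, hlr⟩ := mem_nhds_iff_exists_Ioo_subset.mp hgc
    have push_on (x y : ℝ) (hx : x ∈ Ioo l r) (hy : y ∈ Ioo l r) : P x y := fun hxy =>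
      hg.exists_isLeafPush hpart hmem hxy fun t ht => hlr (ordConnected_Ioo.out hx hy ht)
    filter_upwards [Ioo_mem_nhds hx₀.1 hx₀.2] with y hy
    exact ⟨push_on x₀ y hx₀ hy, push_on y x₀ hy hx₀⟩
  · -- concatenate, or restrict when `v` lies outside `[u, w]`
    rcases le_or_gt u v with huv' | hvu
    · rcases le_or_gt v w with hvw' | hwv
      · obtain ⟨h₁, h₁_push⟩ := huv huv'
        obtain ⟨h₂, h₂_push⟩ := hvw hvw'
        exact ⟨_, h₁_push.trans hpart huv' hvw' h₂_push⟩
      · obtain ⟨h, h_push⟩ := huv huv'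
        exact h_push.exists_restrict hpart hmem le_rfl huw hwv.le
    · obtain ⟨h, h_push⟩ := hvw (hvu.le.trans huw)
      exact h_push.exists_restrict hpart hmem hvu.le huw le_rfl

theorem exists_ray_push (hpart : ∀ p q : S, q ∈ leaf p → leaf q = leaf p)
    (hmem : ∀ p : S, p ∈ leaf p) (hc : IsLocallyPushable leaf c) :
    ∃ F, IsLeafIsotopy leaf F ∧ (∀ x ≤ 0, F x = id) ∧ ∀ x, 0 ≤ x → F x (c 0) = c x := by
  choose K hK using fun n : ℕ => hc.exists_isLeafPush hpart hmem (lt_add_one (n : ℝ)).le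
  have hchain := isLeafPush_pushChain hpart hmem hK
  have hstab {n m : ℕ} {x : ℝ} (hnm : n ≤ m) (hx : x ≤ n) :=
    pushChain_eq_of_le (fun n => (hK n).eq_id) hnm hx
  refine ⟨fun x => pushChain K ⌈x⌉₊ x,
    ⟨continuous_natCeil_of_stabilizing (fun n => (hchain n).continuous) hstab,
      fun x => (hchain _).isHomeomorph x, fun x => (hchain _).mem_leaf x⟩,
    fun x hx => by simp only [Nat.ceil_eq_zero.mpr hx]; rfl,
    fun x hx => (hchain _).apply_start x ⟨hx, Nat.le_ceil x⟩⟩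

end IsLocallyPushable

end LeafPush

theorem point_pushing_isotopy_general {S : Type*} [TopologicalSpace S]
    (leaf : S → Set S)
    (hpart : ∀ p q : S, q ∈ leaf p → leaf q = leaf p)
    (hmem : ∀ p : S, p ∈ leaf p)
    (c : ℝ → S)
    (z : S) (hz : z = c 0)
    -- local pushing isotopies from flows in foliated balls
    (loc : ∀ x₀ : ℝ, ∃ δ > (0 : ℝ), ∃ g : ℝ → S → S,
      Continuous (fun a : ℝ × S => g a.1 a.2) ∧
      g 0 = id ∧
      (∀ s : ℝ, IsHomeomorph (g s)) ∧
      (∀ s : ℝ, |s| ≤ δ → g s (c x₀) = c (x₀ + s)) ∧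
      (∀ (s : ℝ) (p : S), g s p ∈ leaf p)) :
    ∃ f : ℝ → S → S,
      Continuous (fun a : ℝ × S => f a.1 a.2) ∧
      f 0 = id ∧
      (∀ x : ℝ, IsHomeomorph (f x)) ∧
      (∀ x : ℝ, f x z = c x) ∧
      (∀ (x : ℝ) (p : S), f x p ∈ leaf p) := by
  have hc : IsLocallyPushable leaf c := fun x₀ => by
    obtain ⟨δ, hδ, g, hg, -, hg_homeo, hg_push, hg_leaf⟩ := loc x₀
    refine ⟨fun x => g (x - x₀), c x₀,
      (IsLeafIsotopy.mk hg hg_homeo hg_leaf).comp_continuous (continuous_sub_right x₀), ?_⟩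
    filter_upwards [Metric.closedBall_mem_nhds x₀ hδ] with x hx
    rw [hg_push _ hx, add_sub_cancel]
  obtain ⟨F, hF, hF_neg, hF_pos⟩ := hc.exists_ray_push hpart hmem
  obtain ⟨B, hB, hB_neg, hB_pos⟩ := hc.comp_neg.exists_ray_push hpart hmem
  have hf := (hB.comp_continuous continuous_neg).comp hpart hF
  refine ⟨fun x => F x ∘ B (-x), hf.continuous, ?_, hf.isHomeomorph, fun x => ?_, hf.mem_leaf⟩
  · change F 0 ∘ B (-0) = id
    rw [hF_neg 0 le_rfl, neg_zero, hB_neg 0 le_rfl]; rfl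
  · subst hz
    rcases le_total 0 x with hx | hx
    · simp [hB_neg (-x) (neg_nonpos.mpr hx), hF_pos x hx]
    · simpa [hF_neg x hx] using hB_pos (-x) (neg_nonneg.mpr hx)

/-- point-pushing isotopy along a leaf: given a foliated surface
(abstracted as a space `S` partitioned into leaves), a leaf-wise path `c` with
`c 0 = z`, and local pushing isotopies near each parameter (coming from flows of unit
vector fields tangent to the foliation supported in foliated balls), there is a global
isotopy `f^x` with `f⁰ = id`, `f^x z = c x`, depending continuously on `x`, each `f^x`
a homeomorphism preserving the foliation (each point stays in its leaf). -/
theorem point_pushing_isotopy {S : Type*} [TopologicalSpace S]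
    (leaf : S → Set S)
    (hpart : ∀ p q : S, q ∈ leaf p → leaf q = leaf p)
    (hmem : ∀ p : S, p ∈ leaf p)
    (c : ℝ → S) (hc : Continuous c) (hcl : ∀ x : ℝ, c x ∈ leaf (c 0))
    (z : S) (hz : z = c 0)
    -- local pushing isotopies from flows in foliated balls
    (loc : ∀ x₀ : ℝ, ∃ δ > (0 : ℝ), ∃ g : ℝ → S → S,
      Continuous (fun a : ℝ × S => g a.1 a.2) ∧
      g 0 = id ∧
      (∀ s : ℝ, IsHomeomorph (g s)) ∧
      (∀ s : ℝ, |s| ≤ δ → g s (c x₀) = c (x₀ + s)) ∧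
      (∀ (s : ℝ) (p : S), g s p ∈ leaf p)) :
    ∃ f : ℝ → S → S,
      Continuous (fun a : ℝ × S => f a.1 a.2) ∧
      f 0 = id ∧
      (∀ x : ℝ, IsHomeomorph (f x)) ∧
      (∀ x : ℝ, f x z = c x) ∧
      (∀ (x : ℝ) (p : S), f x p ∈ leaf p) :=
  point_pushing_isotopy_general leaf hpart hmem c z hz loc
end
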